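/- For every integer n ≥ 2, the null variance of the sixth power of Kendall's tau satisfies M_{τ,12}(n) − M_{τ,6}(n)² = 128(n−2) Q_{τ,6}(n) / (164726744056875 n¹¹ (n−1)¹¹), where Q_{τ,6}(n) = 100874173400000n¹⁵ + 106587400920000n¹⁴ − 1350735059674000n¹³ − 2750236703502288n¹² + 705156071105876n¹¹ + 18114848707300164n¹⁰ + 74210935173807565n⁹ + 32519698879088181n⁸ − 379954037364238322n⁷ − 639273543932846298n⁶ + 136412983449767425n⁵ + 1193679769717739457n⁴ + 1569782012721160896n³ + 1559385642899802384n² + 1047269150681247360n + 285343922116915200. -/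

import Mathlib

/-!
Write `S = C(n,2) - 2 inv` for Kendall's score, so that `τ = S / C(n,2)`. Prepending a new first
value `v ∈ {0, …, n}` to a permutation of `n` letters creates exactly `v` new inversions, so
`S_{n+1} = S_n + (n - 2v)` with `v` uniform and independent of `S_n`. The moments of `S` therefore
satisfy a binomial-convolution recursion in `n`, driven by the power sums of `n, n - 2, …, -n`.
Its solutions for `r ≤ 12` are explicit polynomials in `n`, and the variance of `τ⁶` is a rational
function of the sixth and twelfth moments.
-/

open Finset Equiv Nat

namespace Equiv.Perm

variable {n : ℕ}

def invCount (π : Perm (Fin n)) : ℕ :=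
  #{ij : Fin n × Fin n | ij.1 < ij.2 ∧ π ij.2 < π ij.1}

def insertFirst (e : Perm (Fin n)) (v : Fin (n + 1)) : Perm (Fin (n + 1)) :=
  (finSuccEquiv n).trans (e.optionCongr.trans (finSuccEquiv' v).symm)

@[simp]
lemma insertFirst_zero (e : Perm (Fin n)) (v : Fin (n + 1)) : insertFirst e v 0 = v := by
  simp [insertFirst]

@[simp]
lemma insertFirst_succ (e : Perm (Fin n)) (v : Fin (n + 1)) (i : Fin n) :
    insertFirst e v i.succ = v.succAbove (e i) := by
  simp [insertFirst]

lemma bijective_insertFirst :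
    Function.Bijective fun p : Perm (Fin n) × Fin (n + 1) ↦ insertFirst p.1 p.2 := by
  rw [Fintype.bijective_iff_injective_and_card]
  refine ⟨fun ⟨e, v⟩ ⟨e', v'⟩ h ↦ ?_, by simp [Fintype.card_perm, factorial_succ, mul_comm]⟩
  obtain rfl : v = v' := by simpa using congr($h 0)
  obtain rfl : e = e' := Equiv.ext fun i ↦ by simpa using congr($h i.succ)
  rfl

lemma invCount_eq_sum (π : Perm (Fin n)) :
    invCount π = ∑ i, ∑ j, if i < j ∧ π j < π i then 1 else 0 := by
  rw [invCount, card_filter, Fintype.sum_prod_type]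

lemma invCount_insertFirst (e : Perm (Fin n)) (v : Fin (n + 1)) :
    invCount (insertFirst e v) = invCount e + v := by
  simp only [invCount_eq_sum, Fin.sum_univ_succ, insertFirst_zero, insertFirst_succ,
    Fin.succ_pos, Fin.succ_lt_succ_iff, Fin.succAbove_lt_succAbove_iff,
    Fin.succAbove_lt_iff_castSucc_lt, true_and, false_and, if_false, zero_add, Fin.not_lt_zero]
  have hcount : (∑ w : Fin n, if w.castSucc < v then 1 else 0) = (v : ℕ) := by
    simp only [← card_filter, Fin.lt_def, Fin.val_castSucc, Fin.card_filter_val_lt]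
    exact min_eq_right v.is_le
  rw [Equiv.sum_comp e (fun w ↦ if w.castSucc < v then 1 else 0), hcount, add_comm]

/-- Kendall's `S` statistic: the number of concordant minus the number of discordant pairs. -/
def kendallScore (π : Perm (Fin n)) : ℝ := (n.choose 2 : ℝ) - 2 * invCount π

lemma kendallScore_insertFirst (e : Perm (Fin n)) (v : Fin (n + 1)) :
    kendallScore (insertFirst e v) = kendallScore e + (n - 2 * (v : ℕ)) := by
  simp only [kendallScore, invCount_insertFirst, cast_choose_two]
  push_cast
  ring

lemma kendallScore_div_choose_two (hn : 2 ≤ n) (π : Perm (Fin n)) :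
    kendallScore π / n.choose 2 = 1 - 4 * (invCount π : ℝ) / ((n : ℝ) * ((n : ℝ) - 1)) := by
  have hn1 : (n : ℝ) - 1 ≠ 0 := by
    have : (2 : ℝ) ≤ n := by exact_mod_cast hn
    linarith
  rw [kendallScore, cast_choose_two]
  field_simp
  ring

end Equiv.Perm

open Equiv.Perm

noncomputable def symmPowSum (m n : ℕ) : ℝ := ∑ k ∈ range (n + 1), ((n : ℝ) - 2 * k) ^ m

noncomputable def scoreMoment (r n : ℕ) : ℝ := ∑ π : Perm (Fin n), kendallScore π ^ r

lemma scoreMoment_succ (r n : ℕ) :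
    scoreMoment r (n + 1) =
      ∑ j ∈ range (r + 1), scoreMoment j n * symmPowSum (r - j) n * r.choose j := by
  rw [scoreMoment, ← Fintype.sum_bijective _ bijective_insertFirst _ _ fun _ ↦ rfl,
    Fintype.sum_prod_type]
  simp only [kendallScore_insertFirst, add_pow, scoreMoment, symmPowSum, sum_mul, mul_sum]
  rw [Fintype.sum_congr _ _ fun e ↦ (Fin.sum_univ_eq_sum_range
    (fun k ↦ ∑ j ∈ range (r + 1), kendallScore e ^ j * ((n : ℝ) - 2 * k) ^ (r - j) * r.choose j)
    (n + 1)).trans sum_comm, sum_comm]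
  exact sum_congr rfl fun j _ ↦ sum_comm

theorem scoreMoment_eq_of_recursion {R : ℕ} (f : ℕ → ℝ → ℝ) (hzero : ∀ r ≤ R, f r 0 = 0 ^ r)
    (hsucc : ∀ r ≤ R, ∀ n : ℕ, ((n : ℝ) + 1) * f r (n + 1) =
      ∑ j ∈ range (r + 1), f j n * symmPowSum (r - j) n * r.choose j)
    {r : ℕ} (hr : r ≤ R) (n : ℕ) : scoreMoment r n = n ! * f r n := by
  induction n generalizing r with
  | zero => simp [scoreMoment, kendallScore, invCount, hzero r hr]
  | succ n ih =>
    have hlower : ∀ j ∈ range (r + 1), scoreMoment j n * symmPowSum (r - j) n * r.choose j =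
        n ! * (f j n * symmPowSum (r - j) n * r.choose j) := fun j hj ↦ by
      rw [ih ((Nat.lt_succ_iff.mp (mem_range.mp hj)).trans hr)]
      ring
    rw [scoreMoment_succ, sum_congr rfl hlower, ← mul_sum, ← hsucc r hr, factorial_succ]
    push_cast
    ring

lemma symmPowSum_add_two (m n : ℕ) :
    symmPowSum m (n + 2) = symmPowSum m n + ((n : ℝ) + 2) ^ m + (-((n : ℝ) + 2)) ^ m := by
  rw [symmPowSum, sum_range_succ, sum_range_succ', symmPowSum]
  push_cast
  congr 2
  · exact sum_congr rfl fun k _ ↦ by ring_nf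
  · ring_nf
  · ring_nf

lemma symmPowSum_eq_of_step {m : ℕ} (g : ℝ → ℝ) (h0 : g 0 = 0 ^ m) (h1 : g 1 = (-1) ^ m + 1)
    (hstep : ∀ x, g (x + 2) = g x + (x + 2) ^ m + (-(x + 2)) ^ m) (n : ℕ) :
    symmPowSum m n = g n := by
  induction n using Nat.twoStepInduction with
  | zero => simp [symmPowSum, h0]
  | one => simp [symmPowSum, sum_range_succ, h1, add_comm]; norm_num
  | more n ih _ => rw [symmPowSum_add_two, ih]; push_cast; rw [hstep]

/-- The closed form of `symmPowSum m` for `m ≤ 12`; odd power sums vanish by the symmetry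
`k ↦ n - k`. -/
noncomputable def symmPowSumPoly : ℕ → ℝ → ℝ
  | 0, x => 1 + x
  | 2, x => (2 / 3) * x + x ^ 2 + (1 / 3) * x ^ 3
  | 4, x => -(8 / 15) * x + (4 / 3) * x ^ 3 + x ^ 4 + (1 / 5) * x ^ 5
  | 6, x => (32 / 21) * x - (8 / 3) * x ^ 3 + 2 * x ^ 5 + x ^ 6 + (1 / 7) * x ^ 7
  | 8, x =>
    -(128 / 15) * x + (128 / 9) * x ^ 3 - (112 / 15) * x ^ 5 + (8 / 3) * x ^ 7 + x ^ 8
      + (1 / 9) * x ^ 9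
  | 10, x =>
    (2560 / 33) * x - 128 * x ^ 3 + 64 * x ^ 5 - 16 * x ^ 7 + (10 / 3) * x ^ 9 + x ^ 10
      + (1 / 11) * x ^ 11
  | 12, x =>
    -(1415168 / 1365) * x + (5120 / 3) * x ^ 3 - (4224 / 5) * x ^ 5 + (1408 / 7) * x ^ 7
      - (88 / 3) * x ^ 9 + 4 * x ^ 11 + x ^ 12 + (1 / 13) * x ^ 13
  | _, _ => 0

lemma symmPowSum_eq_poly {m : ℕ} (hm : m ≤ 12) (n : ℕ) : symmPowSum m n = symmPowSumPoly m n := by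
  interval_cases m <;> refine symmPowSum_eq_of_step _ ?_ ?_ ?_ n <;> intros <;>
    simp only [symmPowSumPoly] <;> ring

/-- The `r`-th moment `scoreMoment r n / n!` of `S`, for `r ≤ 12`, as a polynomial in `n`. -/
noncomputable def scoreMomentPoly : ℕ → ℝ → ℝ
  | 0, _ => 1
  | 2, x => -(5 / 18) * x + (1 / 6) * x ^ 2 + (1 / 9) * x ^ 3
  | 4, x =>
    (31 / 225) * x + (25 / 108) * x ^ 2 - (29 / 90) * x ^ 3 - (91 / 540) * x ^ 4
      + (19 / 225) * x ^ 5 + (1 / 27) * x ^ 6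
  | 6, x =>
    -(328 / 1323) * x - (31 / 54) * x ^ 2 - (1319 / 68040) * x ^ 3 + (1073 / 1080) * x ^ 4
      + (1507 / 4536) * x ^ 5 - (599 / 1512) * x ^ 6 - (12457 / 79380) * x ^ 7 + (13 / 270) * x ^ 8
      + (5 / 243) * x ^ 9
  | 8, x =>
    (248 / 225) * x + (551267 / 212625) * x ^ 2 + (14263 / 17010) * x ^ 3
      - (17909107 / 6123600) * x ^ 4 - (258469 / 72900) * x ^ 5 - (222539 / 2187000) * x ^ 6
      + (9233 / 4860) * x ^ 7 + (1346599 / 2041200) * x ^ 8 - (32101 / 85050) * x ^ 9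
      - (713669 / 3827250) * x ^ 10 + (98 / 3645) * x ^ 11 + (35 / 2187) * x ^ 12
  | 10, x =>
    -(7808 / 1089) * x - (59396 / 2835) * x ^ 2 - (2987921 / 187110) * x ^ 3
      + (10056091 / 510300) * x ^ 4 + (703557883 / 19245600) * x ^ 5 + (6827509 / 816480) * x ^ 6
      - (47182229 / 3367980) * x ^ 7 - (18768023 / 2041200) * x ^ 8 - (55360787 / 134719200) * x ^ 9
      + (20949739 / 8981280) * x ^ 10 + (24987319 / 21170160) * x ^ 11 - (109579 / 510300) * x ^ 12
      - (91822 / 382725) * x ^ 13 + (7 / 1458) * x ^ 14 + (35 / 2187) * x ^ 15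
  | 12, x =>
    (605161216 / 5589675) * x + (26934002728 / 114604875) * x ^ 2 + (362305817 / 7239375) * x ^ 3
      - (2189464877 / 23575860) * x ^ 4 - (57771427643 / 398034000) * x ^ 5
      - (510935412143 / 1543147200) * x ^ 6 - (2617935402001 / 27862380000) * x ^ 7
      + (177910105103 / 720135360) * x ^ 8 + (43041817961 / 398034000) * x ^ 9
      - (162461245091 / 2571912000) * x ^ 10 - (13176465223 / 442260000) * x ^ 11
      + (923263630799 / 220670049600) * x ^ 12 + (872145819977 / 398432034000) * x ^ 13
      + (58750674977 / 49509306000) * x ^ 14 + (2449634 / 9568125) * x ^ 15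
      - (1298693 / 4592700) * x ^ 16 - (77 / 2187) * x ^ 17 + (385 / 19683) * x ^ 18
  | _, _ => 0

lemma scoreMoment_eq_poly {r : ℕ} (hr : r ≤ 12) (n : ℕ) :
    scoreMoment r n = n ! * scoreMomentPoly r n := by
  refine scoreMoment_eq_of_recursion scoreMomentPoly (fun s hs ↦ ?_) (fun s hs n ↦ ?_) hr n
  · interval_cases s <;> simp [scoreMomentPoly]
  · rw [sum_congr rfl fun j _ ↦ by rw [symmPowSum_eq_poly (by omega)]]
    interval_cases s <;>
      simp only [sum_range_succ, sum_range_zero, zero_add, reduceSub, symmPowSumPoly,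
        scoreMomentPoly] <;>
      norm_num [Nat.choose] <;> ring

/-- Null variance of the sixth power of Kendall's tau. -/
theorem stmt12 (n : ℕ) (hn : 2 ≤ n)
    (invp : Perm (Fin n) → ℕ)
    (hinv : ∀ π, invp π = (Finset.univ.filter
      (fun ij : Fin n × Fin n => ij.1 < ij.2 ∧ π ij.2 < π ij.1)).card)
    (τ : Perm (Fin n) → ℝ)
    (hτ : ∀ π, τ π = 1 - 4 * (invp π : ℝ) / ((n : ℝ) * ((n : ℝ) - 1)))
    (M : ℕ → ℝ)
    (hM : ∀ r, M r = (1 / (n.factorial : ℝ)) * ∑ π : Perm (Fin n), (τ π) ^ r) :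
    M 12 - (M 6) ^ 2 = 128 * ((n : ℝ) - 2) *
        (100874173400000 * (n : ℝ) ^ 15 + 106587400920000 * (n : ℝ) ^ 14
          - 1350735059674000 * (n : ℝ) ^ 13 - 2750236703502288 * (n : ℝ) ^ 12
          + 705156071105876 * (n : ℝ) ^ 11 + 18114848707300164 * (n : ℝ) ^ 10
          + 74210935173807565 * (n : ℝ) ^ 9 + 32519698879088181 * (n : ℝ) ^ 8
          - 379954037364238322 * (n : ℝ) ^ 7 - 639273543932846298 * (n : ℝ) ^ 6
          + 136412983449767425 * (n : ℝ) ^ 5 + 1193679769717739457 * (n : ℝ) ^ 4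
          + 1569782012721160896 * (n : ℝ) ^ 3 + 1559385642899802384 * (n : ℝ) ^ 2
          + 1047269150681247360 * (n : ℝ) + 285343922116915200) /
      (164726744056875 * (n : ℝ) ^ 11 * ((n : ℝ) - 1) ^ 11) := by
  have hτS : ∀ π, τ π = kendallScore π / n.choose 2 := fun π ↦ by
    rw [hτ, hinv, kendallScore_div_choose_two hn]
    rfl
  have hmoment : ∀ r ≤ 12, M r = scoreMomentPoly r n / (n.choose 2 : ℝ) ^ r := fun r hr ↦ by
    simp only [hM, hτS, div_pow, ← sum_div]
    rw [← scoreMoment, scoreMoment_eq_poly hr]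
    field_simp
  have hn1 : (n : ℝ) - 1 ≠ 0 := by
    have : (2 : ℝ) ≤ n := by exact_mod_cast hn
    linarith
  rw [hmoment 12 le_rfl, hmoment 6 (by norm_num)]
  simp only [scoreMomentPoly, cast_choose_two]
  field_simp
  ring
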